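/- arXiv:cs/0610151 — 2 statements merged into one kernel-verified Lean document; each statement's English description precedes it below -/
import Mathlib

section
/- Let τ > 0, E_b > 0, and let b, b' : ℕ → {0,1} be two bit streams. If there exists a bit position i with 1 ≤ i ≤ j such that b_i ≠ b'_i, then the repeated PPM waveforms satisfy x_b(t) · x_{b'}(t) = 0 for every t ≥ (j−1)τ; i.e., after time (j−1)τ the two waveforms have disjoint support. -/
lemma digits_split (g : ℕ → ℕ) (k : ℕ) :
    ∑ i ∈ Finset.Icc 1 (k+1), g i * 2 ^ (k+1-i)
      = 2 * (∑ i ∈ Finset.Icc 1 k, g i * 2 ^ (k-i)) + g (k+1) := by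
  rw [Finset.sum_Icc_succ_top (by omega : 1 ≤ k+1)]
  have : ∑ i ∈ Finset.Icc 1 k, g i * 2 ^ (k+1-i)
      = 2 * ∑ i ∈ Finset.Icc 1 k, g i * 2 ^ (k-i) := by
    rw [Finset.mul_sum]
    refine Finset.sum_congr rfl fun i hi => ?_
    simp only [Finset.mem_Icc] at hi
    have : k + 1 - i = (k - i) + 1 := by omega
    rw [this, pow_succ]; ring
  rw [this]; simp

lemma digits_inj (k : ℕ) : ∀ (g g' : ℕ → ℕ), (∀ i, g i ≤ 1) → (∀ i, g' i ≤ 1) →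
    (∑ i ∈ Finset.Icc 1 k, g i * 2 ^ (k-i)) = (∑ i ∈ Finset.Icc 1 k, g' i * 2 ^ (k-i)) →
    ∀ i ∈ Finset.Icc 1 k, g i = g' i := by
  induction k with
  | zero => simp
  | succ k ih =>
    intro g g' hg hg' heq i hi
    rw [digits_split, digits_split] at heq
    have h1 := hg (k+1); have h2 := hg' (k+1)
    have hlast : g (k+1) = g' (k+1) := by omega
    have hrest : (∑ i ∈ Finset.Icc 1 k, g i * 2 ^ (k-i))
        = (∑ i ∈ Finset.Icc 1 k, g' i * 2 ^ (k-i)) := by omega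
    simp only [Finset.mem_Icc] at hi
    rcases eq_or_lt_of_le hi.2 with h | h
    · rwa [h]
    · exact ih g g' hg hg' hrest i (Finset.mem_Icc.mpr ⟨hi.1, by omega⟩)



/-- The repeated pulse-position-modulation waveform for bit stream `b`
(bits indexed from 1), with slot duration `τ` and energy `Eb` per bit.
On slot `[(k-1)τ, kτ)` (where `k = ⌊t/τ⌋ + 1`), the waveform takes the value
`√(Eb·2^k/τ)` on the sub-slot determined by `m_k(b) = ∑_{i=1}^k b_i 2^{k-i}`
and `0` elsewhere. -/
noncomputable def ppmWave (τ Eb : ℝ) (b : ℕ → Fin 2) (t : ℝ) : ℝ :=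
  let k : ℕ := (⌊t / τ⌋).toNat + 1
  let m : ℕ := ∑ i ∈ Finset.Icc 1 k, (b i : ℕ) * 2 ^ (k - i)
  if ((k : ℝ) - 1) * τ + (m : ℝ) * τ / 2 ^ k ≤ t ∧
      t < ((k : ℝ) - 1) * τ + ((m : ℝ) + 1) * τ / 2 ^ k then
    Real.sqrt (Eb * 2 ^ k / τ)
  else 0

/-- If two bit streams differ at some position `i ≤ j`, then the repeated PPM
waveforms have disjoint supports after time `(j-1)τ`:
`x_b(t) · x_{b'}(t) = 0` for all `t ≥ (j-1)τ`. -/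
theorem repeatedPPM_semiOrthogonal_pointwise
    (τ Eb : ℝ) (hτ : 0 < τ) (hEb : 0 < Eb) (b b' : ℕ → Fin 2)
    (j i : ℕ) (hi1 : 1 ≤ i) (hij : i ≤ j) (hne : b i ≠ b' i) :
    ∀ t : ℝ, ((j : ℝ) - 1) * τ ≤ t →
      ppmWave τ Eb b t * ppmWave τ Eb b' t = 0 := by
  intro t ht
  set k : ℕ := (⌊t / τ⌋).toNat + 1 with hk
  set m : ℕ := ∑ i ∈ Finset.Icc 1 k, (b i : ℕ) * 2 ^ (k - i) with hm
  set m' : ℕ := ∑ i ∈ Finset.Icc 1 k, (b' i : ℕ) * 2 ^ (k - i) with hm'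
  -- k ≥ j
  have hfloor : (j : ℤ) - 1 ≤ ⌊t / τ⌋ := by
    apply Int.le_floor.mpr
    push_cast
    rw [le_div_iff₀ hτ]
    exact ht
  have hik : i ≤ k := by omega
  -- m ≠ m'
  have hmm : m ≠ m' := by
    intro h
    apply hne
    have := digits_inj k (fun i => (b i : ℕ)) (fun i => (b' i : ℕ))
      (fun l => Nat.lt_succ_iff.mp (b l).isLt) (fun l => Nat.lt_succ_iff.mp (b' l).isLt) h i (Finset.mem_Icc.mpr ⟨hi1, hik⟩)
    exact Fin.val_injective this
  have h2k : (0 : ℝ) < 2 ^ k := by positivity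
  simp only [ppmWave, ← hk, ← hm, ← hm']
  by_cases h1 : ((k : ℝ) - 1) * τ + (m : ℝ) * τ / 2 ^ k ≤ t ∧
      t < ((k : ℝ) - 1) * τ + ((m : ℝ) + 1) * τ / 2 ^ k
  · by_cases h2 : ((k : ℝ) - 1) * τ + (m' : ℝ) * τ / 2 ^ k ≤ t ∧
        t < ((k : ℝ) - 1) * τ + ((m' : ℝ) + 1) * τ / 2 ^ k
    · exfalso
      have ha : (m : ℝ) * τ / 2 ^ k < ((m' : ℝ) + 1) * τ / 2 ^ k := by
        have := lt_of_le_of_lt h1.1 h2.2; linarith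
      have hb : (m' : ℝ) * τ / 2 ^ k < ((m : ℝ) + 1) * τ / 2 ^ k := by
        have := lt_of_le_of_lt h2.1 h1.2; linarith
      rw [div_lt_div_iff₀ h2k h2k] at ha hb
      have ha' : (m : ℝ) < (m' : ℝ) + 1 := by nlinarith
      have hb' : (m' : ℝ) < (m : ℝ) + 1 := by nlinarith
      have : m < m' + 1 := by exact_mod_cast ha'
      have : m' < m + 1 := by exact_mod_cast hb'
      omega
    · rw [if_neg h2, mul_zero]
  · rw [if_neg h1, zero_mul]
end

section
/- Let τ > 0, E_b > 0, and let b, b' : ℕ → {0,1} be two bit streams. If there exists a bit position i with 1 ≤ i ≤ j such that b_i ≠ b'_i, then for every integer n ≥ j the repeated PPM waveforms are orthogonal on the suffix interval: ∫_{(j−1)τ}^{nτ} x_b(t) · x_{b'}(t) dt = 0. -/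
/-- Digits are determined by the PPM position sum. -/
lemma ppm_sum_inj (b b' : ℕ → Fin 2) :
    ∀ k : ℕ, (∑ i ∈ Finset.Icc 1 k, (b i : ℕ) * 2 ^ (k - i)) =
      (∑ i ∈ Finset.Icc 1 k, (b' i : ℕ) * 2 ^ (k - i)) →
    ∀ i ∈ Finset.Icc 1 k, b i = b' i := by
  intro k
  induction k with
  | zero => intro _ i hi; simp at hi
  | succ k ih =>
    intro h i hi
    have expand : ∀ c : ℕ → Fin 2,
        (∑ i ∈ Finset.Icc 1 (k+1), (c i : ℕ) * 2 ^ (k + 1 - i)) =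
        2 * (∑ i ∈ Finset.Icc 1 k, (c i : ℕ) * 2 ^ (k - i)) + (c (k+1) : ℕ) := by
      intro c
      rw [Finset.sum_Icc_succ_top (by omega)]
      have : ∀ x ∈ Finset.Icc 1 k, (c x : ℕ) * 2 ^ (k + 1 - x) =
          2 * ((c x : ℕ) * 2 ^ (k - x)) := by
        intro x hx
        simp only [Finset.mem_Icc] at hx
        have : k + 1 - x = (k - x) + 1 := by omega
        rw [this, pow_succ]; ring
      rw [Finset.sum_congr rfl this, ← Finset.mul_sum]
      simp
    rw [expand b, expand b'] at h
    have hb1 : (b (k+1) : ℕ) < 2 := (b (k+1)).isLt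
    have hb2 : (b' (k+1) : ℕ) < 2 := (b' (k+1)).isLt
    have heq : (b (k+1) : ℕ) = (b' (k+1) : ℕ) ∧
        (∑ i ∈ Finset.Icc 1 k, (b i : ℕ) * 2 ^ (k - i)) =
        (∑ i ∈ Finset.Icc 1 k, (b' i : ℕ) * 2 ^ (k - i)) := by omega
    simp only [Finset.mem_Icc] at hi
    rcases Nat.lt_or_ge i (k+1) with hik | hik
    · exact ih heq.2 i (Finset.mem_Icc.mpr ⟨hi.1, by omega⟩)
    · have : i = k + 1 := by omega
      subst this
      exact Fin.ext heq.1

/-- Pointwise vanishing of the product past slot `j`. -/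
lemma ppm_prod_zero (τ Eb : ℝ) (hτ : 0 < τ) (b b' : ℕ → Fin 2)
    (j i : ℕ) (hi1 : 1 ≤ i) (hij : i ≤ j) (hne : b i ≠ b' i)
    (t : ℝ) (ht : ((j : ℝ) - 1) * τ ≤ t) :
    ppmWave τ Eb b t * ppmWave τ Eb b' t = 0 := by
  set k : ℕ := (⌊t / τ⌋).toNat + 1 with hk
  have hjk : j ≤ k := by
    have h1 : ((j : ℤ) - 1 : ℝ) ≤ t / τ := by
      rw [le_div_iff₀ hτ]; push_cast; linarith
    have h2 : (j : ℤ) - 1 ≤ ⌊t / τ⌋ := Int.le_floor.mpr (by push_cast at h1 ⊢; linarith)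
    have h3 : (j : ℤ) - 1 ≤ (⌊t / τ⌋).toNat := le_trans h2 (Int.self_le_toNat _)
    omega
  set m : ℕ := ∑ i ∈ Finset.Icc 1 k, (b i : ℕ) * 2 ^ (k - i) with hm
  set m' : ℕ := ∑ i ∈ Finset.Icc 1 k, (b' i : ℕ) * 2 ^ (k - i) with hm'
  have hmm : m ≠ m' := by
    intro hcon
    exact hne (ppm_sum_inj b b' k hcon i (Finset.mem_Icc.mpr ⟨hi1, le_trans hij hjk⟩))
  show (if ((k : ℝ) - 1) * τ + (m : ℝ) * τ / 2 ^ k ≤ t ∧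
      t < ((k : ℝ) - 1) * τ + ((m : ℝ) + 1) * τ / 2 ^ k then
    Real.sqrt (Eb * 2 ^ k / τ) else 0) *
    (if ((k : ℝ) - 1) * τ + (m' : ℝ) * τ / 2 ^ k ≤ t ∧
      t < ((k : ℝ) - 1) * τ + ((m' : ℝ) + 1) * τ / 2 ^ k then
    Real.sqrt (Eb * 2 ^ k / τ) else 0) = 0
  split_ifs with h1 h2 h2
  · exfalso
    have hpos : (0 : ℝ) < 2 ^ k := by positivity
    rcases lt_or_gt_of_ne hmm with hlt | hlt
    · have hle : (m : ℝ) + 1 ≤ (m' : ℝ) := by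
        exact_mod_cast Nat.succ_le_of_lt hlt
      have : ((m : ℝ) + 1) * τ / 2 ^ k ≤ (m' : ℝ) * τ / 2 ^ k := by
        gcongr
      linarith [h1.2, h2.1]
    · have hle : (m' : ℝ) + 1 ≤ (m : ℝ) := by
        exact_mod_cast Nat.succ_le_of_lt hlt
      have : ((m' : ℝ) + 1) * τ / 2 ^ k ≤ (m : ℝ) * τ / 2 ^ k := by
        gcongr
      linarith [h2.2, h1.1]
  · exact mul_zero _
  · exact zero_mul _
  · exact zero_mul _

/-- If two bit streams differ at some position `i ≤ j`, then the repeated PPM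
waveforms are orthogonal on every suffix interval `[(j-1)τ, nτ]` with `n ≥ j`:
`∫_{(j-1)τ}^{nτ} x_b(t) · x_{b'}(t) dt = 0`. -/
theorem repeatedPPM_semiOrthogonal_integral
    (τ Eb : ℝ) (hτ : 0 < τ) (hEb : 0 < Eb) (b b' : ℕ → Fin 2)
    (j i : ℕ) (hi1 : 1 ≤ i) (hij : i ≤ j) (hne : b i ≠ b' i) :
    ∀ n : ℕ, j ≤ n →
      ∫ t in (((j : ℝ) - 1) * τ)..((n : ℝ) * τ),
        ppmWave τ Eb b t * ppmWave τ Eb b' t = 0 := by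
  intro n hn
  have hab : ((j : ℝ) - 1) * τ ≤ (n : ℝ) * τ := by
    have : (j : ℝ) - 1 ≤ (n : ℝ) := by
      have : (j : ℝ) ≤ (n : ℝ) := by exact_mod_cast hn
      linarith
    nlinarith
  have heq : Set.EqOn (fun t => ppmWave τ Eb b t * ppmWave τ Eb b' t)
      (fun _ => (0 : ℝ)) (Set.uIcc (((j : ℝ) - 1) * τ) ((n : ℝ) * τ)) := by
    intro t htmem
    rw [Set.uIcc_of_le hab] at htmem
    exact ppm_prod_zero τ Eb hτ b b' j i hi1 hij hne t htmem.1
  rw [intervalIntegral.integral_congr heq]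
  simp
end
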